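/- For d ≥ 1, ε > 0, and f, g ∈ ℝ^d, the Fourier-type transform of the regularized symplectic Feynman weight against standard Gaussian measure satisfies: (2π)^d ∫_{ℝ^{2d}} exp(i(⟨a,f⟩ + ⟨b,g⟩)) Φ(a,b) dμ(a,b) = (2π/√(ε²+1))^d · exp(-(ε(|f|² + |g|²) + 2i⟨f,g⟩)/(2(ε²+1))), where Φ(a,b) = exp(-(1/2)⟨(a,b), K_ε(a,b)⟩) with K_ε = -((1-ε)Id_{ℝ^{2d}} + i(0, Id; Id, 0)), and μ is the standard Gaussian measure on ℝ^{2d}. -/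

import Mathlib

open MeasureTheory Real Complex ProbabilityTheory
open scoped NNReal

/-!
The weight factorises over the `d` coordinate pairs `(a μ, b μ)`, so by Fubini the integral is a
product of `d` integrals over `ℝ²` against `γ ⊗ γ`, `γ = gaussianReal 0 1`. Each of these is a
Gaussian integral for the complex symmetric matrix `[[ε, -i], [-i, ε]]`, whose real part is
positive definite and whose determinant is `ε² + 1`; it is computed by integrating out one
variable at a time, completing the square each time (`integral_cexp_quadratic`).
-/

lemma integrable_gaussianReal_iff {E : Type*} [NormedAddCommGroup E] [NormedSpace ℝ E]
    {μ : ℝ} {v : ℝ≥0} {f : ℝ → E} (hv : v ≠ 0) :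
    Integrable f (gaussianReal μ v) ↔ Integrable (fun x ↦ gaussianPDFReal μ v x • f x) := by
  rw [gaussianReal_of_var_ne_zero _ hv, gaussianPDF_def,
    integrable_withDensity_iff_integrable_smul' (by fun_prop)
      (ae_of_all _ fun _ ↦ ENNReal.ofReal_lt_top)]
  simp_rw [ENNReal.toReal_ofReal (gaussianPDFReal_nonneg _ _ _)]

lemma gaussianPDFReal_smul_cexp_quadratic (t : ℝ) (c : ℂ) (x : ℝ) :
    gaussianPDFReal 0 1 x • cexp ((1 - t) / 2 * x ^ 2 + c * x)
      = (√(2 * π))⁻¹ * cexp (-(t / 2) * x ^ 2 + c * x + 0) := by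
  rw [gaussianPDFReal, Complex.real_smul]
  push_cast
  rw [mul_one, mul_assoc, ← Complex.exp_add]
  ring_nf

lemma integrable_cexp_quadratic_gaussianReal {t : ℝ} (ht : 0 < t) (c : ℂ) :
    Integrable (fun x : ℝ ↦ cexp ((1 - t) / 2 * x ^ 2 + c * x)) (gaussianReal 0 1) := by
  rw [integrable_gaussianReal_iff one_ne_zero]
  simp_rw [gaussianPDFReal_smul_cexp_quadratic]
  exact (integrable_cexp_quadratic (by simpa using ht) c 0).const_mul _

lemma integral_cexp_quadratic_gaussianReal {t : ℝ} (ht : 0 < t) (c : ℂ) :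
    ∫ x, cexp ((1 - t) / 2 * x ^ 2 + c * x) ∂gaussianReal 0 1
      = (√t)⁻¹ * cexp (c ^ 2 / (2 * t)) := by
  simp_rw [integral_gaussianReal_eq_integral_smul one_ne_zero,
    gaussianPDFReal_smul_cexp_quadratic, integral_const_mul]
  rw [integral_cexp_quadratic (by simpa using ht), neg_neg]
  have ht' : (t : ℂ) ≠ 0 := by exact_mod_cast ht.ne'
  have hsqrt : (π / (t / 2) : ℂ) ^ (1 / 2 : ℂ) = ((√(2 * π / t) : ℝ) : ℂ) := by
    rw [Real.sqrt_eq_rpow, Complex.ofReal_cpow (by positivity)]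
    push_cast
    congr 1
    field_simp
  have hexp : (0 : ℂ) - c ^ 2 / (4 * -(t / 2)) = c ^ 2 / (2 * t) := by
    field_simp
    ring
  rw [hsqrt, hexp, Real.sqrt_div' _ ht.le, ← mul_assoc]
  congr 1
  have : √(2 * π) ≠ 0 := by positivity
  push_cast
  field_simp

lemma cexp_symplectic_eq_mul (ε : ℝ) (a b : ℂ) (x y : ℝ) :
    cexp ((1 - ε) / 2 * (x ^ 2 + y ^ 2) + I * x * y + a * x + b * y)
      = cexp ((1 - ε) / 2 * x ^ 2 + a * x) * cexp ((1 - ε) / 2 * y ^ 2 + (b + I * x) * y) := by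
  rw [← Complex.exp_add]
  ring_nf

lemma integrable_cexp_symplectic {ε : ℝ} (hε : 0 < ε) (a b : ℂ) :
    Integrable (fun p : ℝ × ℝ ↦ cexp ((1 - ε) / 2 * (p.1 ^ 2 + p.2 ^ 2) + I * p.1 * p.2
      + a * p.1 + b * p.2)) ((gaussianReal 0 1).prod (gaussianReal 0 1)) := by
  have hprod := (integrable_cexp_quadratic_gaussianReal hε a).mul_prod
    (integrable_cexp_quadratic_gaussianReal hε b)
  refine hprod.mono (by fun_prop) (ae_of_all _ fun p ↦ le_of_eq ?_)
  have hsplit : cexp ((1 - ε) / 2 * (p.1 ^ 2 + p.2 ^ 2) + I * p.1 * p.2 + a * p.1 + b * p.2)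
      = cexp ((1 - ε) / 2 * p.1 ^ 2 + a * p.1) * cexp ((1 - ε) / 2 * p.2 ^ 2 + b * p.2)
        * cexp ((p.1 * p.2 : ℝ) * I) := by
    rw [← Complex.exp_add, ← Complex.exp_add]
    push_cast
    ring_nf
  rw [hsplit, norm_mul (_ * _), Complex.norm_exp_ofReal_mul_I, mul_one]

-- The right side is `(det A)^(-1/2) exp(½ wᵀ A⁻¹ w)` for `A = [[ε, -i], [-i, ε]]`, `w = (a, b)`.
lemma integral_cexp_symplectic {ε : ℝ} (hε : 0 < ε) (a b : ℂ) :
    ∫ p : ℝ × ℝ, cexp ((1 - ε) / 2 * (p.1 ^ 2 + p.2 ^ 2) + I * p.1 * p.2 + a * p.1 + b * p.2)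
        ∂(gaussianReal 0 1).prod (gaussianReal 0 1)
      = (√(ε ^ 2 + 1))⁻¹ * cexp ((ε * (a ^ 2 + b ^ 2) + 2 * I * a * b) / (2 * (ε ^ 2 + 1))) := by
  have hε' : (ε : ℂ) ≠ 0 := by exact_mod_cast hε.ne'
  have hε1 : (ε : ℂ) ^ 2 + 1 ≠ 0 := by exact_mod_cast (by positivity : ε ^ 2 + 1 ≠ 0)
  have ht : 0 < (ε ^ 2 + 1) / ε := by positivity
  have hinner (x : ℝ) :
      ∫ y, cexp ((1 - ε) / 2 * (x ^ 2 + y ^ 2) + I * x * y + a * x + b * y) ∂gaussianReal 0 1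
        = (√ε)⁻¹ * cexp (b ^ 2 / (2 * ε))
          * cexp ((1 - ((ε ^ 2 + 1) / ε : ℝ)) / 2 * x ^ 2 + (a + I * b / ε) * x) := by
    simp_rw [cexp_symplectic_eq_mul, integral_const_mul,
      integral_cexp_quadratic_gaussianReal hε]
    rw [mul_left_comm, mul_assoc, ← Complex.exp_add, ← Complex.exp_add]
    congr 2
    push_cast
    field_simp
    linear_combination x ^ 2 * I_sq
  rw [integral_prod _ (integrable_cexp_symplectic hε a b)]
  simp_rw [hinner, integral_const_mul, integral_cexp_quadratic_gaussianReal ht]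
  have hsqrt : √ε * √((ε ^ 2 + 1) / ε) = √(ε ^ 2 + 1) := by
    rw [← Real.sqrt_mul hε.le]
    congr 1
    field_simp
  rw [mul_mul_mul_comm, ← ofReal_mul, ← mul_inv, hsqrt, ← Complex.exp_add]
  congr 2
  push_cast
  field_simp
  linear_combination b ^ 2 * I_sq

lemma integral_pi_prod_pi_eq_prod {ι α β 𝕜 : Type*} [Fintype ι] [RCLike 𝕜]
    [MeasurableSpace α] [MeasurableSpace β] (μ : ι → Measure α) (ν : ι → Measure β)
    [∀ i, SigmaFinite (μ i)] [∀ i, SigmaFinite (ν i)] (F : ι → α × β → 𝕜) :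
    ∫ p, ∏ i, F i (p.1 i, p.2 i) ∂(Measure.pi μ).prod (Measure.pi ν)
      = ∏ i, ∫ q, F i q ∂(μ i).prod (ν i) := by
  rw [← (measurePreserving_arrowProdEquivProdArrow α β ι μ ν).integral_comp']
  exact integral_fintype_prod_eq_prod F

lemma cexp_linear_mul_cexp_quadratic_eq_prod {d : ℕ} (ε : ℝ) (f g : Fin d → ℝ)
    (p : (Fin d → ℝ) × (Fin d → ℝ)) :
    cexp (I * (((∑ μ, p.1 μ * f μ : ℝ) : ℂ) + ((∑ μ, p.2 μ * g μ : ℝ) : ℂ))) *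
        cexp (-(1 / 2 : ℂ) * (-(((1 - ε : ℝ) : ℂ) * (((∑ μ, p.1 μ ^ 2 : ℝ) : ℂ)
          + ((∑ μ, p.2 μ ^ 2 : ℝ) : ℂ)) + 2 * I * ((∑ μ, p.1 μ * p.2 μ : ℝ) : ℂ))))
      = ∏ μ, cexp ((1 - ε) / 2 * ((p.1 μ : ℂ) ^ 2 + (p.2 μ : ℂ) ^ 2) + I * p.1 μ * p.2 μ
          + I * f μ * p.1 μ + I * g μ * p.2 μ) := by
  rw [← Complex.exp_add, ← Complex.exp_sum]
  congr 1
  push_cast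
  simp only [mul_add, neg_add, Finset.mul_sum, ← Finset.sum_neg_distrib, ← Finset.sum_add_distrib]
  exact Finset.sum_congr rfl fun μ _ ↦ by ring

theorem stmt1_general (d : ℕ) (ε : ℝ) (hε : 0 < ε) (f g : Fin d → ℝ) :
    -- μ : standard Gaussian measure on ℝ^{2d} = ℝ^d × ℝ^d
    -- Φ(a,b) = exp(-(1/2)⟨(a,b), K_ε (a,b)⟩) with
    -- ⟨(a,b), K_ε (a,b)⟩ = -((1-ε)(|a|²+|b|²) + 2i⟨a,b⟩)
    ((2 * Real.pi : ℂ) ^ d) *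
      ∫ p : (Fin d → ℝ) × (Fin d → ℝ),
        Complex.exp (Complex.I * (((∑ μ, p.1 μ * f μ : ℝ) : ℂ) + ((∑ μ, p.2 μ * g μ : ℝ) : ℂ))) *
        Complex.exp (-(1 / 2 : ℂ) *
          (-(((1 - ε : ℝ) : ℂ) * (((∑ μ, p.1 μ ^ 2 : ℝ) : ℂ) + ((∑ μ, p.2 μ ^ 2 : ℝ) : ℂ))
             + 2 * Complex.I * ((∑ μ, p.1 μ * p.2 μ : ℝ) : ℂ))))
        ∂((Measure.pi fun _ : Fin d => gaussianReal 0 1).prod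
           (Measure.pi fun _ : Fin d => gaussianReal 0 1))
    = ((2 * Real.pi / Real.sqrt (ε ^ 2 + 1) : ℝ) : ℂ) ^ d *
      Complex.exp (-((((ε * ((∑ μ, f μ ^ 2) + (∑ μ, g μ ^ 2)) : ℝ) : ℂ)
          + 2 * Complex.I * ((∑ μ, f μ * g μ : ℝ) : ℂ)) / (2 * ((ε ^ 2 + 1 : ℝ) : ℂ)))) := by
  simp_rw [cexp_linear_mul_cexp_quadratic_eq_prod]
  rw [integral_pi_prod_pi_eq_prod (fun _ ↦ gaussianReal 0 1) (fun _ ↦ gaussianReal 0 1)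
    (fun μ q ↦ cexp ((1 - ε) / 2 * ((q.1 : ℂ) ^ 2 + (q.2 : ℂ) ^ 2) + I * q.1 * q.2
          + I * f μ * q.1 + I * g μ * q.2))]
  simp_rw [integral_cexp_symplectic hε,
    Finset.prod_mul_distrib, Finset.prod_const, Finset.card_univ, Fintype.card_fin,
    ← Complex.exp_sum, ← mul_assoc, ← mul_pow]
  congr 2
  · push_cast
    ring
  · push_cast
    have hterm (i : Fin d) : ε * ((I * f i) ^ 2 + (I * g i) ^ 2) + 2 * I * I * f i * I * g i
        = -(ε * ((f i : ℂ) ^ 2 + (g i : ℂ) ^ 2) + 2 * I * (f i * g i)) := by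
      linear_combination (ε * ((f i : ℂ) ^ 2 + (g i : ℂ) ^ 2) + 2 * I * f i * g i) * I_sq
    simp_rw [← Finset.sum_div, hterm, Finset.sum_neg_distrib, Finset.sum_add_distrib,
      ← Finset.mul_sum, Finset.sum_add_distrib, neg_div]

theorem stmt1 (d : ℕ) (hd : 1 ≤ d) (ε : ℝ) (hε : 0 < ε) (f g : Fin d → ℝ) :
    -- μ : standard Gaussian measure on ℝ^{2d} = ℝ^d × ℝ^d
    -- Φ(a,b) = exp(-(1/2)⟨(a,b), K_ε (a,b)⟩) with
    -- ⟨(a,b), K_ε (a,b)⟩ = -((1-ε)(|a|²+|b|²) + 2i⟨a,b⟩)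
    ((2 * Real.pi : ℂ) ^ d) *
      ∫ p : (Fin d → ℝ) × (Fin d → ℝ),
        Complex.exp (Complex.I * (((∑ μ, p.1 μ * f μ : ℝ) : ℂ) + ((∑ μ, p.2 μ * g μ : ℝ) : ℂ))) *
        Complex.exp (-(1 / 2 : ℂ) *
          (-(((1 - ε : ℝ) : ℂ) * (((∑ μ, p.1 μ ^ 2 : ℝ) : ℂ) + ((∑ μ, p.2 μ ^ 2 : ℝ) : ℂ))
             + 2 * Complex.I * ((∑ μ, p.1 μ * p.2 μ : ℝ) : ℂ))))
        ∂((Measure.pi fun _ : Fin d => gaussianReal 0 1).prod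
           (Measure.pi fun _ : Fin d => gaussianReal 0 1))
    = ((2 * Real.pi / Real.sqrt (ε ^ 2 + 1) : ℝ) : ℂ) ^ d *
      Complex.exp (-((((ε * ((∑ μ, f μ ^ 2) + (∑ μ, g μ ^ 2)) : ℝ) : ℂ)
          + 2 * Complex.I * ((∑ μ, f μ * g μ : ℝ) : ℂ)) / (2 * ((ε ^ 2 + 1 : ℝ) : ℂ)))) :=
  stmt1_general d ε hε f g
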